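/- Suppose F = f + Ψ where f : ℝⁿ → ℝ is L-smooth (L > 0) and Ψ : ℝⁿ → ℝ ∪ {+∞} is proper, closed and convex, and suppose F attains its minimum at x*. Suppose {M_k}_{k≥1} is a sequence of affine subspaces of ℝⁿ and {x_k}, {y_k}, {z_k} are sequences such that for each k ≥ 1: (i) y_k minimizes ‖y − x*‖ over y ∈ M_k; (ii) x_k minimizes F over M_k; (iii) z_k ∈ M_k satisfies ⟨G_{1/L}(z_k), y_k − z_k⟩ ≥ 0 and −⟨G_{1/L}(z_k), x_k − z_k⟩ ≤ 0; and (iv) M_{k+1} contains the affine sets z_k + span{G_{1/L}(z_k)}, y_k + span{G_{1/L}(z_k)}, and x_k + span{G_{1/L}(x_k)}. Then for all k ≥ 2, F(x̄_k) ≤ F(x̄_{k−1}) − (1/(2L))‖G_{1/L}(x_k)‖², where x̄_k = x_k − G_{1/L}(x_k)/L. If in addition f is convex, then for all k ≥ 1, Φ_{k+1} ≤ Φ_k, where Φ_k = ‖y_k − x*‖² + k(k+1)(F(x_k) − F(x*))/(2L). -/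

import Mathlib

/-!
For `p = prox_{Ψ/L}(z - ∇f(z)/L)` and `G = L (z - p)`, optimality of the prox point
(`(z - ∇f(z)/L - p) L` is a subgradient of `Ψ` at `p`) together with the upper quadratic bound
of `L`-smoothness gives the prox-gradient inequality
`F(p) + ‖G‖²/(2L) ≤ f(z) + ⟨∇f(z), w - z⟩ + Ψ(w) + ⟨G, z - w⟩` for every `w`.

Taking `w = z = x_k` gives `F(x̄_k) + ‖G(x_k)‖²/(2L) ≤ F(x_k)`, and `F(x_k) ≤ F(x̄_{k-1})` because
`x̄_{k-1} ∈ M_k`. If `f` is convex, the right-hand side is at most `F(w) + ⟨G, z - w⟩`; at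
`z = z_k` the conditions on `z_k` bound `⟨G, z_k - x_k⟩ ≤ 0` and
`⟨G, z_k - x*⟩ ≤ ⟨G, y_k - x*⟩`, while `y_{k+1}` is at least as close to `x*` as
`y_k - (k+1)/(2L) G ∈ M_{k+1}`, and `x_{k+1}` is at least as good as `p ∈ M_{k+1}`. The sum of the
two prox-gradient inequalities with weights `k(k+1)/(2L)` and `(k+1)/L` and of the expansion of
`‖y_k - (k+1)/(2L) G - x*‖²` is `Φ_{k+1} ≤ Φ_k`.
-/

open scoped RealInnerProductSpace
open Filter Topology Set

theorem nonpos_of_forall_mem_Ioc_le_mul {a C : ℝ} (h : ∀ l ∈ Ioc (0 : ℝ) 1, a ≤ l * C) :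
    a ≤ 0 := by
  have hlim : Tendsto (fun l : ℝ => l * C) (𝓝[>] 0) (𝓝 0) := by
    simpa using ((continuous_mul_const C).tendsto 0).mono_left nhdsWithin_le_nhds
  exact ge_of_tendsto hlim (eventually_of_mem (Ioc_mem_nhdsGT one_pos) h)

theorem ConvexOn.add_fderiv_sub_le {E : Type*} [NormedAddCommGroup E] [NormedSpace ℝ E]
    {f : E → ℝ} {f' : E →L[ℝ] ℝ} {z : E} (hf : ConvexOn ℝ univ f) (hz : HasFDerivAt f f' z)
    (w : E) : f z + f' (w - z) ≤ f w := by
  set g : ℝ →ᵃ[ℝ] E := AffineMap.lineMap z w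
  have hline : ConvexOn ℝ univ (f ∘ g) := hf.comp_affineMap g
  have hderiv : HasDerivAt (f ∘ g) (f' (w - z)) 0 := by
    rw [← AffineMap.lineMap_apply_zero z w (k := ℝ)] at hz
    exact hz.comp_hasDerivAt 0 AffineMap.hasDerivAt_lineMap
  have := hline.le_slope_of_hasDerivAt (mem_univ 0) (mem_univ 1) one_pos hderiv
  simp only [g, slope_def_field, Function.comp_apply, AffineMap.lineMap_apply_one,
    AffineMap.lineMap_apply_zero, sub_zero, div_one] at this
  linarith

variable {E : Type*} [NormedAddCommGroup E] [InnerProductSpace ℝ E]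

def IsProxPoint (Ψ : E → EReal) (t : ℝ) (u p : E) : Prop :=
  ∀ w, Ψ p + ((‖u - p‖ ^ 2 / (2 * t) : ℝ) : EReal) ≤ Ψ w + ((‖u - w‖ ^ 2 / (2 * t) : ℝ) : EReal)

theorem add_inner_le_of_forall_mem_Ioc {ψp ψw t : ℝ} {u p w : E}
    (h : ∀ l ∈ Ioc (0 : ℝ) 1, ψp + ‖u - p‖ ^ 2 / (2 * t)
      ≤ (1 - l) * ψp + l * ψw + ‖u - ((1 - l) • p + l • w)‖ ^ 2 / (2 * t)) :
    ψp + t⁻¹ * ⟪u - p, w - p⟫ ≤ ψw := by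
  suffices ∀ l ∈ Ioc (0 : ℝ) 1, ψp + t⁻¹ * ⟪u - p, w - p⟫ - ψw ≤ l * (‖w - p‖ ^ 2 / (2 * t)) by
    linarith [nonpos_of_forall_mem_Ioc_le_mul this]
  intro l hl
  have hexpand : ‖u - ((1 - l) • p + l • w)‖ ^ 2
      = ‖u - p‖ ^ 2 - 2 * l * ⟪u - p, w - p⟫ + l ^ 2 * ‖w - p‖ ^ 2 := by
    rw [show u - ((1 - l) • p + l • w) = (u - p) - l • (w - p) by module, norm_sub_sq_real,
      real_inner_smul_right, norm_smul, mul_pow, Real.norm_eq_abs, sq_abs]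
    ring
  have hl_min := h l hl
  rw [hexpand] at hl_min
  refine le_of_mul_le_mul_left ?_ hl.1
  linear_combination hl_min

theorem IsProxPoint.add_inner_le {Ψ : E → EReal}
    (hconvex : ∀ x y : E, ∀ a b : ℝ, 0 ≤ a → 0 ≤ b → a + b = 1 →
      Ψ (a • x + b • y) ≤ (a : EReal) * Ψ x + (b : EReal) * Ψ y)
    {t : ℝ} {u p : E} (hp : IsProxPoint Ψ t u p) (w : E) :
    Ψ p + ((t⁻¹ * ⟪u - p, w - p⟫ : ℝ) : EReal) ≤ Ψ w := by
  have hpw := hp w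
  cases hψw : Ψ w with
  | top => exact le_top
  | bot =>
    rw [hψw, EReal.bot_add, le_bot_iff, EReal.add_eq_bot_iff] at hpw
    simp_all
  | coe ψw =>
    cases hψp : Ψ p with
    | bot => simp
    | top =>
      rw [hψp, hψw, EReal.top_add_coe, ← EReal.coe_add, top_le_iff] at hpw
      exact absurd hpw (EReal.coe_ne_top _)
    | coe ψp =>
      refine EReal.coe_le_coe_iff.2 (add_inner_le_of_forall_mem_Ioc fun l ⟨hl0, hl1⟩ => ?_)
      have hconv : Ψ ((1 - l) • p + l • w) ≤ (((1 - l) * ψp + l * ψw : ℝ) : EReal) := by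
        simpa [hψp, hψw] using hconvex p w (1 - l) l (by linarith) hl0.le (by ring)
      have := (hp _).trans (add_le_add_left hconv _)
      rw [hψp] at this
      exact_mod_cast this

theorem IsProxPoint.prox_grad_le {Ψ : E → EReal}
    (hconvex : ∀ x y : E, ∀ a b : ℝ, 0 ≤ a → 0 ≤ b → a + b = 1 →
      Ψ (a • x + b • y) ≤ (a : EReal) * Ψ x + (b : EReal) * Ψ y)
    {L : ℝ} (hL : 0 < L) {f : E → ℝ} {g z p : E}
    (hp : IsProxPoint Ψ (1 / L) (z - (1 / L) • g) p)
    (hsmooth : f p ≤ f z + ⟪g, p - z⟫ + L / 2 * ‖p - z‖ ^ 2) (w : E) :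
    (f p : EReal) + Ψ p + ((1 / (2 * L) * ‖L • (z - p)‖ ^ 2 : ℝ) : EReal)
      ≤ ((f z + ⟪g, w - z⟫ + ⟪L • (z - p), z - w⟫ : ℝ) : EReal) + Ψ w := by
  have hopt := hp.add_inner_le hconvex w
  have hr : (1 / L)⁻¹ * ⟪z - (1 / L) • g - p, w - p⟫
      = L * ⟪z - p, w - z⟫ + L * ‖z - p‖ ^ 2 - ⟪g, w - z⟫ - ⟪g, z - p⟫ := by
    rw [show z - (1 / L) • g - p = (z - p) - (1 / L) • g by abel,
      show w - p = (w - z) + (z - p) by abel]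
    rw [inner_sub_left (z - p) ((1 / L) • g), inner_add_right, inner_add_right,
      real_inner_self_eq_norm_sq, real_inner_smul_left, real_inner_smul_left]
    field_simp
    ring
  rw [hr] at hopt
  have hreal : f p + 1 / (2 * L) * ‖L • (z - p)‖ ^ 2 ≤ f z + ⟪g, w - z⟫ + ⟪L • (z - p), z - w⟫
      + (L * ⟪z - p, w - z⟫ + L * ‖z - p‖ ^ 2 - ⟪g, w - z⟫ - ⟪g, z - p⟫) := by
    rw [norm_smul, mul_pow, Real.norm_eq_abs, sq_abs, real_inner_smul_left,
      ← neg_sub w z, inner_neg_right]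
    rw [← neg_sub z p, inner_neg_right, norm_neg] at hsmooth
    field_simp
    linarith
  generalize L * ⟪z - p, w - z⟫ + L * ‖z - p‖ ^ 2 - ⟪g, w - z⟫ - ⟪g, z - p⟫ = R at hopt hreal
  calc (f p : EReal) + Ψ p + ((1 / (2 * L) * ‖L • (z - p)‖ ^ 2 : ℝ) : EReal)
      = ((f p + 1 / (2 * L) * ‖L • (z - p)‖ ^ 2 : ℝ) : EReal) + Ψ p := by
        rw [EReal.coe_add, add_right_comm]
    _ ≤ ((f z + ⟪g, w - z⟫ + ⟪L • (z - p), z - w⟫ + R : ℝ) : EReal) + Ψ p := by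
        gcongr
    _ = ((f z + ⟪g, w - z⟫ + ⟪L • (z - p), z - w⟫ : ℝ) : EReal) + (Ψ p + R) := by
        rw [EReal.coe_add _ R, add_assoc, add_comm (Ψ p)]
    _ ≤ _ := by gcongr

theorem IsProxPoint.prox_grad_le_self {Ψ : E → EReal}
    (hconvex : ∀ x y : E, ∀ a b : ℝ, 0 ≤ a → 0 ≤ b → a + b = 1 →
      Ψ (a • x + b • y) ≤ (a : EReal) * Ψ x + (b : EReal) * Ψ y)
    {L : ℝ} (hL : 0 < L) {f : E → ℝ} {g z p : E}
    (hp : IsProxPoint Ψ (1 / L) (z - (1 / L) • g) p)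
    (hsmooth : f p ≤ f z + ⟪g, p - z⟫ + L / 2 * ‖p - z‖ ^ 2) :
    (f p : EReal) + Ψ p + ((1 / (2 * L) * ‖L • (z - p)‖ ^ 2 : ℝ) : EReal)
      ≤ (f z : EReal) + Ψ z := by
  simpa using hp.prox_grad_le hconvex hL hsmooth z

theorem IsProxPoint.prox_grad_le_of_convexOn [CompleteSpace E] {Ψ : E → EReal}
    (hconvex : ∀ x y : E, ∀ a b : ℝ, 0 ≤ a → 0 ≤ b → a + b = 1 →
      Ψ (a • x + b • y) ≤ (a : EReal) * Ψ x + (b : EReal) * Ψ y)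
    {L : ℝ} (hL : 0 < L) {f : E → ℝ} {g z p : E}
    (hp : IsProxPoint Ψ (1 / L) (z - (1 / L) • g) p)
    (hsmooth : f p ≤ f z + ⟪g, p - z⟫ + L / 2 * ‖p - z‖ ^ 2)
    (hf : ConvexOn ℝ univ f) (hg : HasGradientAt f g z) (w : E) :
    (f p : EReal) + Ψ p + ((1 / (2 * L) * ‖L • (z - p)‖ ^ 2 : ℝ) : EReal)
      ≤ (f w : EReal) + Ψ w + ((⟪L • (z - p), z - w⟫ : ℝ) : EReal) := by
  have hgrad : f z + ⟪g, w - z⟫ ≤ f w := by simpa using hf.add_fderiv_sub_le hg.hasFDerivAt w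
  calc _ ≤ _ := hp.prox_grad_le hconvex hL hsmooth w
    _ ≤ ((f w + ⟪L • (z - p), z - w⟫ : ℝ) : EReal) + Ψ w := by gcongr
    _ = _ := by rw [EReal.coe_add, add_right_comm]

theorem potential_step {L B a Fx Fp Fn Fs : ℝ} {G x y y' z xs : E} (hL : 0 < L) (hB : 0 ≤ B)
    (ha : 0 ≤ a) (hLa : 2 * L * a ^ 2 ≤ B + 2 * a)
    (hx : Fp + 1 / (2 * L) * ‖G‖ ^ 2 ≤ Fx + ⟪G, z - x⟫)
    (hs : Fp + 1 / (2 * L) * ‖G‖ ^ 2 ≤ Fs + ⟪G, z - xs⟫)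
    (hzx : 0 ≤ ⟪G, x - z⟫) (hzy : 0 ≤ ⟪G, y - z⟫) (hn : Fn ≤ Fp)
    (hy : ‖y' - xs‖ ≤ ‖y - a • G - xs‖) :
    ‖y' - xs‖ ^ 2 + (B + 2 * a) * (Fn - Fs) ≤ ‖y - xs‖ ^ 2 + B * (Fx - Fs) := by
  have hsq : ‖y' - xs‖ ^ 2 ≤ ‖y - xs‖ ^ 2 - 2 * a * ⟪G, y - xs⟫ + a ^ 2 * ‖G‖ ^ 2 := by
    calc ‖y' - xs‖ ^ 2 ≤ ‖y - a • G - xs‖ ^ 2 := by gcongr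
      _ = _ := by
        rw [show y - a • G - xs = (y - xs) - a • G by abel, norm_sub_sq_real,
          real_inner_smul_right, norm_smul, mul_pow, Real.norm_eq_abs, sq_abs,
          real_inner_comm]
        ring
  have hzx' : ⟪G, z - x⟫ ≤ 0 := by rw [← neg_sub, inner_neg_right]; linarith
  have hzy' : ⟪G, z - xs⟫ ≤ ⟪G, y - xs⟫ := by
    rw [← sub_add_sub_cancel y z xs, inner_add_right]; linarith
  -- `hLa` is exactly what lets the descent terms absorb the `a² ‖G‖²` of the step `y - a G`.
  have hGa : a ^ 2 * ‖G‖ ^ 2 ≤ (B + 2 * a) * (1 / (2 * L) * ‖G‖ ^ 2) := by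
    rw [← mul_assoc]
    gcongr
    rw [mul_one_div, le_div_iff₀ (by positivity)]
    linarith
  have e1 := mul_le_mul_of_nonneg_left hx hB
  have e2 := mul_le_mul_of_nonneg_left hs (by positivity : 0 ≤ 2 * a)
  have e3 := mul_le_mul_of_nonneg_left hn (by positivity : 0 ≤ B + 2 * a)
  have e4 := mul_nonpos_of_nonneg_of_nonpos hB hzx'
  have e5 := mul_le_mul_of_nonneg_left hzy' (by positivity : 0 ≤ 2 * a)
  linarith

theorem potential_step_ereal {L k : ℝ} {Fx Fp Fn Fs : EReal} {G x y y' z xs : E} (hL : 0 < L)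
    (hk : 0 < k) (hFs : Fs ≠ ⊥) (hsx : Fs ≤ Fx) (hsn : Fs ≤ Fn) (hn : Fn ≤ Fp)
    (hx : Fp + ((1 / (2 * L) * ‖G‖ ^ 2 : ℝ) : EReal) ≤ Fx + ((⟪G, z - x⟫ : ℝ) : EReal))
    (hs : Fp + ((1 / (2 * L) * ‖G‖ ^ 2 : ℝ) : EReal) ≤ Fs + ((⟪G, z - xs⟫ : ℝ) : EReal))
    (hzx : 0 ≤ ⟪G, x - z⟫) (hzy : 0 ≤ ⟪G, y - z⟫)
    (hy : ‖y' - xs‖ ≤ ‖y + (-((k + 1) / (2 * L))) • G - xs‖) :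
    ((‖y' - xs‖ ^ 2 : ℝ) : EReal) + (((k + 1) * (k + 2) / (2 * L) : ℝ) : EReal) * (Fn - Fs)
      ≤ ((‖y - xs‖ ^ 2 : ℝ) : EReal) + ((k * (k + 1) / (2 * L) : ℝ) : EReal) * (Fx - Fs) := by
  -- `⊤ - ⊤ = ⊥` in `EReal`, so both sides are `⊥` when `Fs = ⊤`.
  rcases eq_or_ne Fs ⊤ with rfl | hFs_top
  · rw [top_le_iff.mp hsx, EReal.sub_top, EReal.coe_mul_bot_of_pos (by positivity),
      EReal.add_bot]
    exact bot_le
  lift Fs to ℝ using ⟨hFs_top, hFs⟩ with s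
  rcases eq_or_ne Fx ⊤ with rfl | hFx_top
  · rw [EReal.top_sub_coe, EReal.coe_mul_top_of_pos (by positivity), EReal.coe_add_top]
    exact le_top
  lift Fx to ℝ using ⟨hFx_top, ne_bot_of_le_ne_bot (by simp) hsx⟩ with fx
  have hFp_top : Fp ≠ ⊤ := by
    rintro rfl
    rw [EReal.top_add_coe, ← EReal.coe_add, top_le_iff] at hs
    exact EReal.coe_ne_top _ hs
  lift Fp to ℝ using ⟨hFp_top, ne_bot_of_le_ne_bot (ne_bot_of_le_ne_bot (by simp) hsn) hn⟩
    with fp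
  lift Fn to ℝ using ⟨ne_top_of_le_ne_top (by simp) hn, ne_bot_of_le_ne_bot (by simp) hsn⟩
    with fn
  norm_cast at hx hs hn ⊢
  rw [neg_smul, ← sub_eq_add_neg] at hy
  have hLa : 2 * L * ((k + 1) / (2 * L)) ^ 2
      ≤ k * (k + 1) / (2 * L) + 2 * ((k + 1) / (2 * L)) := by
    field_simp
    nlinarith
  calc ‖y' - xs‖ ^ 2 + (k + 1) * (k + 2) / (2 * L) * (fn - s)
      = ‖y' - xs‖ ^ 2 + (k * (k + 1) / (2 * L) + 2 * ((k + 1) / (2 * L))) * (fn - s) := by ring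
    _ ≤ _ := potential_step hL (by positivity) (by positivity) hLa hx hs hzx hzy hn hy

theorem idealized_algorithm_convex_nonconvex_general {n : ℕ} (L : ℝ) (hL : 0 < L)
    (f : EuclideanSpace ℝ (Fin n) → ℝ)
    (f' : EuclideanSpace ℝ (Fin n) → EuclideanSpace ℝ (Fin n))
    (hdiff : ∀ x, HasGradientAt f (f' x) x)
    (hsmooth : ∀ x y : EuclideanSpace ℝ (Fin n),
      |f x - f y - ⟪f' y, x - y⟫| ≤ L / 2 * ‖x - y‖ ^ 2)
    (Ψ : EuclideanSpace ℝ (Fin n) → EReal)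
    (hproper : (∀ x, Ψ x ≠ ⊥) ∧ (∃ x, Ψ x ≠ ⊤))
    (hconvex : ∀ x y : EuclideanSpace ℝ (Fin n), ∀ a b : ℝ, 0 ≤ a → 0 ≤ b → a + b = 1 →
      Ψ (a • x + b • y) ≤ (a : EReal) * Ψ x + (b : EReal) * Ψ y)
    (prox : ℝ → EuclideanSpace ℝ (Fin n) → EuclideanSpace ℝ (Fin n))
    (hprox : ∀ t : ℝ, 0 < t → ∀ x z : EuclideanSpace ℝ (Fin n),
      Ψ (prox t x) + ((‖x - prox t x‖ ^ 2 / (2 * t) : ℝ) : EReal)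
        ≤ Ψ z + ((‖x - z‖ ^ 2 / (2 * t) : ℝ) : EReal))
    (F : EuclideanSpace ℝ (Fin n) → EReal)
    (hF : ∀ x, F x = (f x : EReal) + Ψ x)
    (G : ℝ → EuclideanSpace ℝ (Fin n) → EuclideanSpace ℝ (Fin n))
    (hG : ∀ t x, G t x = t⁻¹ • (x - prox t (x - t • f' x)))
    (xstar : EuclideanSpace ℝ (Fin n)) (hxstar : ∀ w, F xstar ≤ F w)
    (M : ℕ → AffineSubspace ℝ (EuclideanSpace ℝ (Fin n)))
    (x y z : ℕ → EuclideanSpace ℝ (Fin n))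
    (hy : ∀ k, 1 ≤ k → y k ∈ M k ∧ ∀ w ∈ M k, ‖y k - xstar‖ ≤ ‖w - xstar‖)
    (hx : ∀ k, 1 ≤ k → x k ∈ M k ∧ ∀ w ∈ M k, F (x k) ≤ F w)
    (hz : ∀ k, 1 ≤ k → z k ∈ M k ∧
      0 ≤ ⟪G (1 / L) (z k), y k - z k⟫ ∧
      -⟪G (1 / L) (z k), x k - z k⟫ ≤ 0)
    (hM : ∀ k, 1 ≤ k → ∀ c : ℝ,
      z k + c • G (1 / L) (z k) ∈ M (k + 1) ∧
      y k + c • G (1 / L) (z k) ∈ M (k + 1) ∧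
      x k + c • G (1 / L) (x k) ∈ M (k + 1)) :
    (∀ k, 2 ≤ k →
      F (x k - (1 / L) • G (1 / L) (x k))
        ≤ F (x (k - 1) - (1 / L) • G (1 / L) (x (k - 1)))
          - ((1 / (2 * L) * ‖G (1 / L) (x k)‖ ^ 2 : ℝ) : EReal)) ∧
    (ConvexOn ℝ Set.univ f → ∀ k : ℕ, 1 ≤ k →
      ((‖y (k + 1) - xstar‖ ^ 2 : ℝ) : EReal)
          + ((((k : ℝ) + 1) * ((k : ℝ) + 2) / (2 * L) : ℝ) : EReal)
            * (F (x (k + 1)) - F xstar)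
        ≤ ((‖y k - xstar‖ ^ 2 : ℝ) : EReal)
          + (((k : ℝ) * ((k : ℝ) + 1) / (2 * L) : ℝ) : EReal)
            * (F (x k) - F xstar)) := by
  have hGv : ∀ v, G (1 / L) v = L • (v - prox (1 / L) (v - (1 / L) • f' v)) := fun v => by
    rw [hG, one_div, inv_inv]
  have hbar : ∀ v, v - (1 / L) • G (1 / L) v = prox (1 / L) (v - (1 / L) • f' v) := fun v => by
    rw [hGv, smul_smul, one_div_mul_cancel hL.ne', one_smul, sub_sub_cancel]
  have hpx : ∀ v, IsProxPoint Ψ (1 / L) (v - (1 / L) • f' v)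
      (prox (1 / L) (v - (1 / L) • f' v)) := fun v => hprox _ (by positivity) _
  have hdescent : ∀ u v, f u ≤ f v + ⟪f' v, u - v⟫ + L / 2 * ‖u - v‖ ^ 2 := fun u v => by
    linarith [(abs_le.mp (hsmooth u v)).2]
  constructor
  · intro k hk
    obtain ⟨j, rfl⟩ : ∃ j, k = j + 1 := ⟨k - 1, by omega⟩
    have hdesc : F (x (j + 1) - (1 / L) • G (1 / L) (x (j + 1)))
        + ((1 / (2 * L) * ‖G (1 / L) (x (j + 1))‖ ^ 2 : ℝ) : EReal) ≤ F (x (j + 1)) := by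
      rw [hF, hF, hbar, hGv]
      exact (hpx _).prox_grad_le_self hconvex hL (hdescent _ _)
    have hmem : x j - (1 / L) • G (1 / L) (x j) ∈ M (j + 1) := by
      simpa [sub_eq_add_neg] using (hM j (by omega) (-(1 / L))).2.2
    rw [Nat.add_sub_cancel, EReal.le_sub_iff_add_le (.inl (EReal.coe_ne_bot _))
      (.inl (EReal.coe_ne_top _))]
    exact hdesc.trans ((hx (j + 1) (by omega)).2 _ hmem)
  · intro hconvf k hk
    have hlin : ∀ w, F (z k - (1 / L) • G (1 / L) (z k))
        + ((1 / (2 * L) * ‖G (1 / L) (z k)‖ ^ 2 : ℝ) : EReal)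
        ≤ F w + ((⟪G (1 / L) (z k), z k - w⟫ : ℝ) : EReal) := fun w => by
      rw [hF, hF, hbar, hGv]
      exact (hpx _).prox_grad_le_of_convexOn hconvex hL (hdescent _ _) hconvf (hdiff _) w
    have hmem : z k - (1 / L) • G (1 / L) (z k) ∈ M (k + 1) := by
      simpa [sub_eq_add_neg] using (hM k hk (-(1 / L))).1
    obtain ⟨-, hzy, hzx⟩ := hz k hk
    exact potential_step_ereal hL (by positivity)
      (by rw [hF]; exact EReal.add_ne_bot_iff.2 ⟨EReal.coe_ne_bot _, hproper.1 xstar⟩)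
      (hxstar _) (hxstar _) ((hx (k + 1) (by omega)).2 _ hmem) (hlin (x k)) (hlin xstar)
      (neg_nonpos.mp hzx) hzy ((hy (k + 1) (by omega)).2 _ (hM k hk _).2.1)

/-- the idealized algorithmic framework in the non-strongly
convex / nonconvex composite setting: descent of `F(x̄_k)`, and, if `f` is
convex, monotonicity of the potential
`Φ_k = ‖y_k − x*‖² + k(k+1)(F(x_k) − F(x*))/(2L)`. -/
theorem idealized_algorithm_convex_nonconvex {n : ℕ} (L : ℝ) (hL : 0 < L)
    (f : EuclideanSpace ℝ (Fin n) → ℝ)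
    (f' : EuclideanSpace ℝ (Fin n) → EuclideanSpace ℝ (Fin n))
    (hdiff : ∀ x, HasGradientAt f (f' x) x)
    (hsmooth : ∀ x y : EuclideanSpace ℝ (Fin n),
      |f x - f y - ⟪f' y, x - y⟫| ≤ L / 2 * ‖x - y‖ ^ 2)
    (Ψ : EuclideanSpace ℝ (Fin n) → EReal)
    (hproper : (∀ x, Ψ x ≠ ⊥) ∧ (∃ x, Ψ x ≠ ⊤))
    (hclosed : LowerSemicontinuous Ψ)
    (hconvex : ∀ x y : EuclideanSpace ℝ (Fin n), ∀ a b : ℝ, 0 ≤ a → 0 ≤ b → a + b = 1 →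
      Ψ (a • x + b • y) ≤ (a : EReal) * Ψ x + (b : EReal) * Ψ y)
    (prox : ℝ → EuclideanSpace ℝ (Fin n) → EuclideanSpace ℝ (Fin n))
    (hprox : ∀ t : ℝ, 0 < t → ∀ x z : EuclideanSpace ℝ (Fin n),
      Ψ (prox t x) + ((‖x - prox t x‖ ^ 2 / (2 * t) : ℝ) : EReal)
        ≤ Ψ z + ((‖x - z‖ ^ 2 / (2 * t) : ℝ) : EReal))
    (F : EuclideanSpace ℝ (Fin n) → EReal)
    (hF : ∀ x, F x = (f x : EReal) + Ψ x)
    (G : ℝ → EuclideanSpace ℝ (Fin n) → EuclideanSpace ℝ (Fin n))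
    (hG : ∀ t x, G t x = t⁻¹ • (x - prox t (x - t • f' x)))
    (xstar : EuclideanSpace ℝ (Fin n)) (hxstar : ∀ w, F xstar ≤ F w)
    (M : ℕ → AffineSubspace ℝ (EuclideanSpace ℝ (Fin n)))
    (x y z : ℕ → EuclideanSpace ℝ (Fin n))
    (hy : ∀ k, 1 ≤ k → y k ∈ M k ∧ ∀ w ∈ M k, ‖y k - xstar‖ ≤ ‖w - xstar‖)
    (hx : ∀ k, 1 ≤ k → x k ∈ M k ∧ ∀ w ∈ M k, F (x k) ≤ F w)
    (hz : ∀ k, 1 ≤ k → z k ∈ M k ∧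
      0 ≤ ⟪G (1 / L) (z k), y k - z k⟫ ∧
      -⟪G (1 / L) (z k), x k - z k⟫ ≤ 0)
    (hM : ∀ k, 1 ≤ k → ∀ c : ℝ,
      z k + c • G (1 / L) (z k) ∈ M (k + 1) ∧
      y k + c • G (1 / L) (z k) ∈ M (k + 1) ∧
      x k + c • G (1 / L) (x k) ∈ M (k + 1)) :
    (∀ k, 2 ≤ k →
      F (x k - (1 / L) • G (1 / L) (x k))
        ≤ F (x (k - 1) - (1 / L) • G (1 / L) (x (k - 1)))
          - ((1 / (2 * L) * ‖G (1 / L) (x k)‖ ^ 2 : ℝ) : EReal)) ∧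
    (ConvexOn ℝ Set.univ f → ∀ k : ℕ, 1 ≤ k →
      ((‖y (k + 1) - xstar‖ ^ 2 : ℝ) : EReal)
          + ((((k : ℝ) + 1) * ((k : ℝ) + 2) / (2 * L) : ℝ) : EReal)
            * (F (x (k + 1)) - F xstar)
        ≤ ((‖y k - xstar‖ ^ 2 : ℝ) : EReal)
          + (((k : ℝ) * ((k : ℝ) + 1) / (2 * L) : ℝ) : EReal)
            * (F (x k) - F xstar)) :=
  idealized_algorithm_convex_nonconvex_general L hL f f' hdiff hsmooth Ψ hproper hconvex prox hprox
    F hF G hG xstar hxstar M x y z hy hx hz hM
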